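/- (Inversion symmetry of almost dual prepotentials, case d ≠ 1.) Let F* be a smooth function on an open set V ⊆ ℝ^N satisfying the associativity equations with respect to a constant symmetric invertible matrix g and the dual quasihomogeneity condition Σ_σ p^σ ∂_σ F* = 2F* + (1/(1−d)) g_{ab}p^a p^b, with d ≠ 1. Let t₁(p) = ((1−d)/2) g_{ab}p^a p^b and ι(p) = p/t₁(p). Then on the open set V' = {p : t₁(p) ≠ 0 and ι(p) ∈ V}, the function F̂*(p) := t₁(p)² F*(ι(p)) satisfies the associativity equations with respect to g. -/

import Mathlib

/-!
Differentiating `F̂*(p) = t₁(p)² F*(ι p)` three times, and using the Euler identities obtained by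
differentiating the quasihomogeneity condition once and twice, gives
`t₁(p) ĉ_{abc}(p) = c*_{abc}(ι p) - 2 (P_a g_{bc} + P_b g_{ac} + P_c g_{ab}) + (4/s) P_a P_b P_c`
with `P = g p` and `s = g(p, p)`. The second Euler identity says that `p / s` is the unit of the
commutative associative multiplication defined by `c*(ι p)` and `g`, and this correction of such a
multiplication by its unit keeps it associative.
-/

open scoped BigOperators

noncomputable def pd {N : ℕ} (α : Fin N) (f : (Fin N → ℝ) → ℝ) : (Fin N → ℝ) → ℝ :=
  fun t => fderiv ℝ f t (Pi.single α 1)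

/-- Third partial derivatives `c_{αβγ} = ∂³F/∂t^α∂t^β∂t^γ`. -/
noncomputable def c3 {N : ℕ} (F : (Fin N → ℝ) → ℝ) (α β γ : Fin N) : (Fin N → ℝ) → ℝ :=
  pd α (pd β (pd γ F))

/-- `η_{αβ} = δ_{α+β,N+1}` (in 1-based index notation); in 0-based indexing this is
`β = Fin.rev α`.  It coincides with its own inverse `η^{αβ}`. -/
def eta {N : ℕ} (α β : Fin N) : ℝ := if β = α.rev then 1 else 0

/-- `t₁(p) = ((1-d)/2) g_{ab} p^a p^b`. -/
noncomputable def t1q {N : ℕ} (g : Matrix (Fin N) (Fin N) ℝ) (d : ℝ)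
    (p : Fin N → ℝ) : ℝ :=
  ((1 - d)/2) * ∑ a, ∑ b, g a b * p a * p b

/-- The dual inversion map `ι(p) = p / t₁(p)`. -/
noncomputable def iota {N : ℕ} (g : Matrix (Fin N) (Fin N) ℝ) (d : ℝ)
    (p : Fin N → ℝ) : Fin N → ℝ := fun i => p i / t1q g d p

/-- The associativity equations `c*_{abλ} g^{λμ} c*_{μce} = c*_{cbλ} g^{λμ} c*_{μae}` on `V`. -/
def IsAssocG {N : ℕ} (Fs : (Fin N → ℝ) → ℝ) (g : Matrix (Fin N) (Fin N) ℝ)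
    (V : Set (Fin N → ℝ)) : Prop :=
  ∀ p ∈ V, ∀ a b c e : Fin N,
    ∑ lam, ∑ mu, c3 Fs a b lam p * g⁻¹ lam mu * c3 Fs mu c e p =
    ∑ lam, ∑ mu, c3 Fs c b lam p * g⁻¹ lam mu * c3 Fs mu a e p

open Matrix Filter Topology

section Tensor

variable {R ι : Type*}

def IsSymmTensor (T : ι → ι → ι → R) : Prop :=
  ∀ a b c, T a b c = T b a c ∧ T a b c = T a c b

lemma IsSymmTensor.rotate {T : ι → ι → ι → R} (hT : IsSymmTensor T) (a b c : ι) :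
    T a b c = T b c a := by
  rw [(hT a b c).1, (hT b a c).2]

lemma IsSymmTensor.swap13 {T : ι → ι → ι → R} (hT : IsSymmTensor T) (a b c : ι) :
    T a b c = T c b a := by
  rw [(hT a b c).1, hT.rotate c b a]

def IsAssocTensor [CommSemiring R] [Fintype ι] (H : Matrix ι ι R) (T : ι → ι → ι → R) : Prop :=
  ∀ a b c e, ∑ l, ∑ m, T a b l * H l m * T m c e = ∑ l, ∑ m, T c b l * H l m * T m a e

lemma IsAssocTensor.const_mul [CommSemiring R] [Fintype ι] {H : Matrix ι ι R}
    {T : ι → ι → ι → R} (hT : IsAssocTensor H T) (r : R) :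
    IsAssocTensor H fun a b c => r * T a b c := by
  intro a b c e
  have h := congrArg (r ^ 2 * ·) (hT a b c e)
  simp only [Finset.mul_sum] at h
  convert h using 3 <;> ring

lemma sum_sum_mul_eq_dotProduct_mulVec [CommSemiring R] [Fintype ι] (u w : ι → R)
    (H : Matrix ι ι R) : ∑ l, ∑ m, u l * H l m * w m = u ⬝ᵥ H *ᵥ w := by
  simp only [dotProduct, mulVec, Finset.mul_sum, mul_assoc]

lemma IsSymmTensor.sum_sum_mul_eq_dotProduct_mulVec [CommSemiring R] [Fintype ι]
    {T : ι → ι → ι → R} (hT : IsSymmTensor T) (H : Matrix ι ι R) (x y z w : ι) :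
    ∑ l, ∑ m, T x y l * H l m * T m z w = T x y ⬝ᵥ H *ᵥ T z w := by
  rw [← _root_.sum_sum_mul_eq_dotProduct_mulVec]
  exact Finset.sum_congr rfl fun l _ => Finset.sum_congr rfl fun m _ => by rw [hT.rotate m z w]

variable [Field R] [Fintype ι] {G : Matrix ι ι R}

def inversionTensor (G : Matrix ι ι R) (T : ι → ι → ι → R) (p : ι → R) (s : R) (a b c : ι) : R :=
  T a b c - 2 * ((G *ᵥ p) a * G b c + (G *ᵥ p) b * G a c + (G *ᵥ p) c * G a b)
    + 4 / s * ((G *ᵥ p) a * (G *ᵥ p) b * (G *ᵥ p) c)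

lemma IsSymmTensor.inversionTensor {T : ι → ι → ι → R} (hT : IsSymmTensor T) (hG : G.IsSymm)
    (p : ι → R) (s : R) : IsSymmTensor (inversionTensor G T p s) := by
  intro a b c
  simp only [_root_.inversionTensor]
  rw [hG.apply a b, hG.apply b c]
  exact ⟨by rw [(hT a b c).1]; ring, by rw [(hT a b c).2]; ring⟩

lemma inversionTensor_eq_sub_add (hG : G.IsSymm) (T : ι → ι → ι → R) (p : ι → R) (s : R)
    (a b : ι) :
    inversionTensor G T p s a b = T a b - (2 : R) • ((G *ᵥ p) a • G b + (G *ᵥ p) b • G a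
      + G a b • G *ᵥ p) + (4 / s * (G *ᵥ p) a * (G *ᵥ p) b) • G *ᵥ p := by
  funext c
  simp only [inversionTensor, Pi.add_apply, Pi.sub_apply, Pi.smul_apply, smul_eq_mul]
  rw [hG.apply c a]
  ring

variable [DecidableEq ι]

lemma inv_mulVec_row (hG : G.IsSymm) (hGdet : IsUnit G.det) (y : ι) :
    G⁻¹ *ᵥ G y = Pi.single y 1 := by
  have hcol : G y = G *ᵥ Pi.single y 1 := by
    rw [mulVec_single_one]
    funext i
    exact hG.apply i y
  rw [hcol, mulVec_mulVec, nonsing_inv_mul _ hGdet, one_mulVec]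

lemma inv_mulVec_mulVec (hGdet : IsUnit G.det) (p : ι → R) : G⁻¹ *ᵥ G *ᵥ p = p := by
  rw [mulVec_mulVec, nonsing_inv_mul _ hGdet, one_mulVec]

lemma row_dotProduct_inv_mulVec (hGdet : IsUnit G.det) (y : ι) (w : ι → R) :
    G y ⬝ᵥ G⁻¹ *ᵥ w = w y := by
  rw [dotProduct_mulVec, show G y = Pi.single y 1 ᵥ* G from (single_one_vecMul y G).symm,
    vecMul_vecMul, mul_nonsing_inv _ hGdet, vecMul_one, single_one_dotProduct]

lemma mulVec_dotProduct_inv_mulVec (hG : G.IsSymm) (hGdet : IsUnit G.det) (p w : ι → R) :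
    G *ᵥ p ⬝ᵥ G⁻¹ *ᵥ w = p ⬝ᵥ w := by
  rw [← hG.eq, mulVec_transpose, dotProduct_mulVec, vecMul_vecMul, hG.eq,
    mul_nonsing_inv _ hGdet, vecMul_one]

theorem IsAssocTensor.inversion (hG : G.IsSymm) (hGdet : IsUnit G.det) {T : ι → ι → ι → R}
    (hT : IsSymmTensor T) (hassoc : IsAssocTensor G⁻¹ T) {p : ι → R} {s : R} (hs : s ≠ 0)
    (hps : p ⬝ᵥ G *ᵥ p = s) (hTp : ∀ a b, T a b ⬝ᵥ p = s * G a b) :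
    IsAssocTensor G⁻¹ (inversionTensor G T p s) := by
  have hpT : ∀ a b, p ⬝ᵥ T a b = s * G a b := fun a b => by rw [dotProduct_comm, hTp]
  have hPp : G *ᵥ p ⬝ᵥ p = s := by rw [dotProduct_comm, hps]
  have hGp : ∀ y, G y ⬝ᵥ p = (G *ᵥ p) y := fun y => rfl
  intro a b c e
  have hassoc' := hassoc a b c e
  rw [hT.sum_sum_mul_eq_dotProduct_mulVec, hT.sum_sum_mul_eq_dotProduct_mulVec] at hassoc'
  rw [(hT.inversionTensor hG p s).sum_sum_mul_eq_dotProduct_mulVec,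
    (hT.inversionTensor hG p s).sum_sum_mul_eq_dotProduct_mulVec]
  simp only [inversionTensor_eq_sub_add hG, mulVec_add, mulVec_sub, mulVec_smul,
    inv_mulVec_row hG hGdet, inv_mulVec_mulVec hGdet, dotProduct_add, dotProduct_sub,
    dotProduct_smul, add_dotProduct, sub_dotProduct, smul_dotProduct,
    row_dotProduct_inv_mulVec hGdet, mulVec_dotProduct_inv_mulVec hG hGdet, dotProduct_single_one,
    hGp, hPp, hpT, hTp, smul_eq_mul, Pi.add_apply, Pi.sub_apply, Pi.smul_apply]
  rw [hT.swap13 c b a, hT.swap13 a e c, (hT c b e).2, (hT a e b).2, hG.apply b c, hG.apply a c,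
    hG.apply a b]
  field_simp
  linear_combination s * hassoc'

end Tensor

section PartialDerivatives

variable {N : ℕ} {f h : (Fin N → ℝ) → ℝ} {p : Fin N → ℝ}

noncomputable def euler (f : (Fin N → ℝ) → ℝ) (q : Fin N → ℝ) : ℝ :=
  ∑ σ, q σ * pd σ f q

lemma pd_congr_of_eventuallyEq (hfh : f =ᶠ[𝓝 p] h) (α : Fin N) : pd α f p = pd α h p := by
  simp only [pd, hfh.fderiv_eq]

lemma HasFDerivAt.pd_eq {L : (Fin N → ℝ) →L[ℝ] ℝ} (hf : HasFDerivAt f L p) (α : Fin N) :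
    pd α f p = L (Pi.single α 1) := by
  simp only [pd, hf.fderiv]

lemma fderiv_apply_eq_sum_pd (v : Fin N → ℝ) : fderiv ℝ f p v = ∑ i, v i * pd i f p := by
  conv_lhs => rw [← Finset.univ_sum_single v]
  simp only [map_sum, pd]
  refine Finset.sum_congr rfl fun i _ => ?_
  rw [← smul_eq_mul, ← map_smul]
  congr 1
  ext j
  simp [Pi.single_apply]

lemma pd_add (hf : DifferentiableAt ℝ f p) (hh : DifferentiableAt ℝ h p) (α : Fin N) :
    pd α (fun x => f x + h x) p = pd α f p + pd α h p := by
  simp [pd, fderiv_fun_add hf hh]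

lemma pd_sub (hf : DifferentiableAt ℝ f p) (hh : DifferentiableAt ℝ h p) (α : Fin N) :
    pd α (fun x => f x - h x) p = pd α f p - pd α h p := by
  simp [pd, fderiv_fun_sub hf hh]

lemma pd_mul (hf : DifferentiableAt ℝ f p) (hh : DifferentiableAt ℝ h p) (α : Fin N) :
    pd α (fun x => f x * h x) p = pd α f p * h p + f p * pd α h p := by
  simp only [pd, fderiv_fun_mul hf hh, _root_.add_apply, _root_.smul_apply, smul_eq_mul]
  ring

lemma pd_const (r : ℝ) (α : Fin N) : pd α (fun _ => r) p = 0 := by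
  simp [pd]

lemma pd_const_mul (hf : DifferentiableAt ℝ f p) (r : ℝ) (α : Fin N) :
    pd α (fun x => r * f x) p = r * pd α f p := by
  simp [pd, fderiv_const_mul hf]

lemma pd_sum {ι : Type*} {s : Finset ι} {f : ι → (Fin N → ℝ) → ℝ}
    (hf : ∀ i ∈ s, DifferentiableAt ℝ (f i) p) (α : Fin N) :
    pd α (fun x => ∑ i ∈ s, f i x) p = ∑ i ∈ s, pd α (f i) p := by
  simp [pd, fderiv_fun_sum hf]

lemma pd_apply (i α : Fin N) : pd α (fun x => x i) p = (Pi.single α 1 : Fin N → ℝ) i :=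
  (ContinuousLinearMap.proj (R := ℝ) (φ := fun _ : Fin N => ℝ) i).hasFDerivAt.pd_eq α

lemma pd_inv (hf : DifferentiableAt ℝ f p) (hne : f p ≠ 0) (α : Fin N) :
    pd α (fun x => (f x)⁻¹) p = -pd α f p / f p ^ 2 := by
  have hcomp : (fun x => (f x)⁻¹) = (fun y : ℝ => y⁻¹) ∘ f := rfl
  simp only [pd, hcomp, fderiv_comp p (differentiableAt_inv hne) hf, fderiv_inv,
    ContinuousLinearMap.comp_apply, ContinuousLinearMap.toSpanSingleton_apply, smul_eq_mul]
  ring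

lemma pd_comp {φ : (Fin N → ℝ) → Fin N → ℝ} (hf : DifferentiableAt ℝ f (φ p))
    (hφ : DifferentiableAt ℝ φ p) (α : Fin N) :
    pd α (fun x => f (φ x)) p = ∑ i, pd α (fun x => φ x i) p * pd i f (φ p) := by
  unfold pd
  rw [fderiv_fun_comp p hf hφ, ContinuousLinearMap.comp_apply, fderiv_apply_eq_sum_pd]
  simp only [fderiv_apply hφ]
  rfl

lemma ContDiffAt.pd {m n : WithTop ℕ∞} (hf : ContDiffAt ℝ n f p) (hmn : m + 1 ≤ n) (α : Fin N) :
    ContDiffAt ℝ m (pd α f) p :=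
  (hf.fderiv_right hmn).clm_apply contDiffAt_const

lemma pd_comm (hf : ContDiffAt ℝ 2 f p) (α β : Fin N) :
    pd α (pd β f) p = pd β (pd α f) p := by
  have hdf : DifferentiableAt ℝ (fderiv ℝ f) p :=
    (hf.fderiv_right (m := 1) le_rfl).differentiableAt one_ne_zero
  have hsnd : ∀ v w : Fin N → ℝ,
      fderiv ℝ (fun x => fderiv ℝ f x v) p w = fderiv ℝ (fderiv ℝ f) p w v := fun v w => by
    rw [fderiv_clm_apply hdf (differentiableAt_const v)]
    simp
  show fderiv ℝ (fun x => fderiv ℝ f x (Pi.single β 1)) p (Pi.single α 1)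
    = fderiv ℝ (fun x => fderiv ℝ f x (Pi.single α 1)) p (Pi.single β 1)
  rw [hsnd, hsnd]
  exact hf.isSymmSndFDerivAt (by simp) _ _

lemma euler_pd {r : (Fin N → ℝ) → ℝ} {m : ℝ} (hf : ContDiffAt ℝ 2 f p)
    (hr : DifferentiableAt ℝ r p) (hE : ∀ᶠ x in 𝓝 p, euler f x = m * f x + r x) (b : Fin N) :
    euler (pd b f) p = (m - 1) * pd b f p + pd b r p := by
  have hdf : ∀ σ, DifferentiableAt ℝ (pd σ f) p := fun σ =>
    (hf.pd (m := 1) le_rfl σ).differentiableAt one_ne_zero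
  have h : pd b (fun x => ∑ σ, x σ * pd σ f x) p = pd b (fun x => m * f x + r x) p :=
    pd_congr_of_eventuallyEq hE b
  have hterm : ∀ σ, pd b (fun x => x σ * pd σ f x) p
      = (Pi.single b 1 : Fin N → ℝ) σ * pd σ f p + p σ * pd σ (pd b f) p := fun σ => by
    rw [pd_mul (differentiableAt_apply σ p) (hdf σ), pd_apply, pd_comm hf]
  rw [pd_sum fun σ _ => (differentiableAt_apply σ p).fun_mul (hdf σ),
    Finset.sum_congr rfl fun σ _ => hterm σ, Finset.sum_add_distrib,
    pd_add ((hf.differentiableAt two_ne_zero).const_mul m) hr,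
    pd_const_mul (hf.differentiableAt two_ne_zero)] at h
  simp only [Pi.single_apply, ite_mul, one_mul, zero_mul, Finset.sum_ite_eq', Finset.mem_univ,
    if_true] at h
  unfold euler
  linarith

end PartialDerivatives

section QuadraticForm

variable {N : ℕ} {g : Matrix (Fin N) (Fin N) ℝ} {d : ℝ} {p : Fin N → ℝ}

@[fun_prop]
lemma differentiable_mulVec : Differentiable ℝ (fun x : Fin N → ℝ => g *ᵥ x) := by
  unfold mulVec dotProduct; fun_prop

@[fun_prop]
lemma differentiable_dotProduct :
    Differentiable ℝ (fun x : (Fin N → ℝ) × (Fin N → ℝ) => x.1 ⬝ᵥ x.2) := by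
  unfold dotProduct; fun_prop

@[fun_prop]
lemma differentiable_t1q : Differentiable ℝ (t1q g d) := by
  unfold t1q; fun_prop

lemma sum_sum_apply_mul_mul_eq_dotProduct_mulVec (x : Fin N → ℝ) :
    ∑ a, ∑ b, g a b * x a * x b = x ⬝ᵥ g *ᵥ x := by
  rw [← sum_sum_mul_eq_dotProduct_mulVec]
  simp only [mul_comm (g _ _)]

lemma t1q_eq (x : Fin N → ℝ) : t1q g d x = (1 - d) / 2 * (x ⬝ᵥ g *ᵥ x) := by
  rw [t1q, sum_sum_apply_mul_mul_eq_dotProduct_mulVec]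

lemma t1q_ne_zero_iff : t1q g d p ≠ 0 ↔ 1 - d ≠ 0 ∧ p ⬝ᵥ g *ᵥ p ≠ 0 := by
  simp [t1q_eq]

lemma pd_mulVec_apply (c α : Fin N) : pd α (fun x => (g *ᵥ x) c) p = g c α := by
  show pd α (fun x => ∑ j, g c j * x j) p = _
  rw [pd_sum fun j _ => by fun_prop]
  simp [pd_const_mul (differentiableAt_apply _ p), pd_apply, Pi.single_apply]

lemma pd_dotProduct_mulVec (hg : g.IsSymm) (α : Fin N) :
    pd α (fun x => x ⬝ᵥ g *ᵥ x) p = 2 * (g *ᵥ p) α := by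
  have hterm : ∀ i, pd α (fun x => x i * (g *ᵥ x) i) p
      = (Pi.single α 1 : Fin N → ℝ) i * (g *ᵥ p) i + p i * g i α := fun i => by
    rw [pd_mul (differentiableAt_apply i p) (by fun_prop), pd_apply, pd_mulVec_apply]
  have hcol : ∑ i, p i * g i α = (g *ᵥ p) α := by
    conv_rhs => rw [← hg.eq, mulVec_transpose]
    rfl
  show pd α (fun x => ∑ i, x i * (g *ᵥ x) i) p = _
  rw [pd_sum fun i _ => by fun_prop, Finset.sum_congr rfl fun i _ => hterm i,
    Finset.sum_add_distrib, hcol]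
  simp only [Pi.single_apply, ite_mul, one_mul, zero_mul, Finset.sum_ite_eq', Finset.mem_univ,
    if_true]
  ring

lemma pd_t1q (hg : g.IsSymm) (α : Fin N) : pd α (t1q g d) p = (1 - d) * (g *ᵥ p) α := by
  rw [show t1q g d = fun x => (1 - d) / 2 * (x ⬝ᵥ g *ᵥ x) from funext t1q_eq,
    pd_const_mul (by fun_prop), pd_dotProduct_mulVec hg]
  ring

end QuadraticForm

section Inversion

variable {N : ℕ} {g : Matrix (Fin N) (Fin N) ℝ} {d : ℝ} {p : Fin N → ℝ}
  {h : (Fin N → ℝ) → ℝ}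

lemma iota_eq_smul (x : Fin N → ℝ) : iota g d x = (t1q g d x)⁻¹ • x := by
  ext i
  simp [iota, div_eq_inv_mul]

lemma differentiableAt_iota (hτ : t1q g d p ≠ 0) : DifferentiableAt ℝ (iota g d) p := by
  unfold iota; fun_prop (disch := exact hτ)

lemma isOpen_setOf_t1q_ne_zero_and_iota_mem {V : Set (Fin N → ℝ)} (hV : IsOpen V) :
    IsOpen {p | t1q g d p ≠ 0 ∧ iota g d p ∈ V} := by
  refine isOpen_iff_mem_nhds.2 fun x ⟨hτ, hιx⟩ => ?_
  exact (differentiable_t1q.continuous.continuousAt.eventually_ne hτ).and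
    ((differentiableAt_iota hτ).continuousAt.preimage_mem_nhds (hV.mem_nhds hιx))

lemma pd_iota_apply (hg : g.IsSymm) (hτ : t1q g d p ≠ 0) (i α : Fin N) :
    pd α (fun x => iota g d x i) p
      = ((Pi.single α 1 : Fin N → ℝ) i - (1 - d) * (g *ᵥ p) α * iota g d p i) / t1q g d p := by
  simp only [iota, div_eq_mul_inv]
  rw [pd_mul (differentiableAt_apply i p) (by fun_prop (disch := exact hτ)), pd_apply,
    pd_inv (by fun_prop) hτ, pd_t1q hg]
  field_simp
  ring

lemma pd_comp_iota (hg : g.IsSymm) (hτ : t1q g d p ≠ 0) (hh : DifferentiableAt ℝ h (iota g d p))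
    (α : Fin N) :
    pd α (fun x => h (iota g d x)) p
      = (pd α h (iota g d p) - (1 - d) * (g *ᵥ p) α * euler h (iota g d p)) / t1q g d p := by
  rw [pd_comp hh (differentiableAt_iota hτ)]
  simp only [pd_iota_apply hg hτ, div_mul_eq_mul_div, ← Finset.sum_div, sub_mul,
    Finset.sum_sub_distrib, mul_assoc, ← Finset.mul_sum]
  simp [Pi.single_apply, euler]

/-- The exponent `m` is the Euler degree of `h`, so the terms in `h (ι p)` cancel. -/
lemma pd_pow_mul_comp_iota (hg : g.IsSymm) (hτ : t1q g d p ≠ 0)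
    (hh : DifferentiableAt ℝ h (iota g d p)) {m : ℕ} {ρ : ℝ}
    (hE : euler h (iota g d p) = m * h (iota g d p) + ρ) (α : Fin N) :
    pd α (fun x => t1q g d x ^ m * h (iota g d x)) p
      = t1q g d p ^ m / t1q g d p * (pd α h (iota g d p) - (1 - d) * (g *ᵥ p) α * ρ) := by
  have hpow : pd α (fun x => t1q g d x ^ m) p = m * t1q g d p ^ (m - 1) * pd α (t1q g d) p := by
    simp [pd, fderiv_fun_pow m (differentiable_t1q (g := g) (d := d) p)]
  have hcomp : DifferentiableAt ℝ (fun x => h (iota g d x)) p :=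
    hh.comp p (differentiableAt_iota hτ)
  rw [pd_mul (by fun_prop) hcomp, hpow, pd_t1q hg, pd_comp_iota hg hτ hh, hE]
  rcases m with _ | m
  · simp [div_eq_inv_mul]
  · simp only [Nat.add_sub_cancel, pow_succ]
    field_simp
    push_cast
    ring

lemma dotProduct_mulVec_iota (p : Fin N → ℝ) :
    iota g d p ⬝ᵥ g *ᵥ iota g d p = (p ⬝ᵥ g *ᵥ p) / t1q g d p ^ 2 := by
  simp only [iota_eq_smul p, mulVec_smul, dotProduct_smul, smul_dotProduct, smul_eq_mul]
  field_simp

lemma mulVec_iota_apply (p : Fin N → ℝ) (c : Fin N) :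
    (g *ᵥ iota g d p) c = (g *ᵥ p) c / t1q g d p := by
  simp [iota_eq_smul p, mulVec_smul, div_eq_inv_mul]

end Inversion

section Prepotential

variable {N : ℕ} {g : Matrix (Fin N) (Fin N) ℝ} {d : ℝ} {V : Set (Fin N → ℝ)}
  {F : (Fin N → ℝ) → ℝ} {p q : Fin N → ℝ}

structure IsDualQuasiHomogeneousOn (g : Matrix (Fin N) (Fin N) ℝ) (d : ℝ) (V : Set (Fin N → ℝ))
    (F : (Fin N → ℝ) → ℝ) : Prop where
  isOpen : IsOpen V
  contDiffAt : ∀ q ∈ V, ContDiffAt ℝ (⊤ : ℕ∞) F q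
  euler_eq : ∀ q ∈ V, euler F q = 2 * F q + 1 / (1 - d) * (q ⬝ᵥ g *ᵥ q)

noncomputable def dualInversion (g : Matrix (Fin N) (Fin N) ℝ) (d : ℝ) (F : (Fin N → ℝ) → ℝ) :
    (Fin N → ℝ) → ℝ :=
  fun p => t1q g d p ^ 2 * F (iota g d p)

namespace IsDualQuasiHomogeneousOn

lemma contDiffAt_pd (hF : IsDualQuasiHomogeneousOn g d V F) (hq : q ∈ V) (b : Fin N) :
    ContDiffAt ℝ (⊤ : ℕ∞) (pd b F) q :=
  (hF.contDiffAt q hq).pd (by simp) b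

lemma contDiffAt_pd_pd (hF : IsDualQuasiHomogeneousOn g d V F) (hq : q ∈ V) (b c : Fin N) :
    ContDiffAt ℝ (⊤ : ℕ∞) (pd b (pd c F)) q :=
  (hF.contDiffAt_pd hq c).pd (by simp) b

lemma euler_pd (hF : IsDualQuasiHomogeneousOn g d V F) (hg : g.IsSymm) (hq : q ∈ V)
    (b : Fin N) : euler (pd b F) q = pd b F q + 2 / (1 - d) * (g *ᵥ q) b := by
  have hE : ∀ᶠ x in 𝓝 q, euler F x = (2 : ℝ) * F x + 1 / (1 - d) * (x ⬝ᵥ g *ᵥ x) := by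
    filter_upwards [hF.isOpen.mem_nhds hq] with x hx using hF.euler_eq x hx
  rw [_root_.euler_pd ((hF.contDiffAt q hq).of_le (WithTop.coe_le_coe.2 le_top)) (by fun_prop) hE,
    pd_const_mul (by fun_prop), pd_dotProduct_mulVec hg]
  ring

lemma euler_pd_pd (hF : IsDualQuasiHomogeneousOn g d V F) (hg : g.IsSymm) (hq : q ∈ V)
    (b c : Fin N) : euler (pd b (pd c F)) q = 2 / (1 - d) * g c b := by
  have hE : ∀ᶠ x in 𝓝 q, euler (pd c F) x = (1 : ℝ) * pd c F x + 2 / (1 - d) * (g *ᵥ x) c := by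
    filter_upwards [hF.isOpen.mem_nhds hq] with x hx
    rw [hF.euler_pd hg hx, one_mul]
  rw [_root_.euler_pd ((hF.contDiffAt_pd hq c).of_le (WithTop.coe_le_coe.2 le_top))
      (by fun_prop) hE, pd_const_mul (by fun_prop), pd_mulVec_apply]
  ring

lemma isSymmTensor_c3 (hF : IsDualQuasiHomogeneousOn g d V F) (hq : q ∈ V) :
    IsSymmTensor fun a b c => c3 F a b c q := by
  intro a b c
  constructor
  · exact pd_comm ((hF.contDiffAt_pd hq c).of_le (WithTop.coe_le_coe.2 le_top)) a b
  · refine pd_congr_of_eventuallyEq ?_ a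
    filter_upwards [hF.isOpen.mem_nhds hq] with x hx
    exact pd_comm ((hF.contDiffAt x hx).of_le (WithTop.coe_le_coe.2 le_top)) b c

lemma c3_iota_dotProduct (hF : IsDualQuasiHomogeneousOn g d V F) (hg : g.IsSymm)
    (hτ : t1q g d p ≠ 0) (hιp : iota g d p ∈ V) (a b : Fin N) :
    (fun l => c3 F a b l (iota g d p)) ⬝ᵥ p = (p ⬝ᵥ g *ᵥ p) * g a b := by
  obtain ⟨hk, -⟩ := t1q_ne_zero_iff.1 hτ
  have hterm : ∀ l, c3 F a b l (iota g d p) * p l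
      = t1q g d p * (iota g d p l * pd l (pd a (pd b F)) (iota g d p)) := fun l => by
    have h := (hF.isSymmTensor_c3 hιp).rotate l a b
    rw [← h, c3, iota]
    field_simp
  show ∑ l, c3 F a b l (iota g d p) * p l = _
  simp only [hterm, ← Finset.mul_sum]
  rw [show ∑ l, iota g d p l * pd l (pd a (pd b F)) (iota g d p)
      = euler (pd a (pd b F)) (iota g d p) from rfl, hF.euler_pd_pd hg hιp, t1q_eq, hg.apply]
  field_simp

lemma pd_dualInversion (hF : IsDualQuasiHomogeneousOn g d V F) (hg : g.IsSymm)
    (hτ : t1q g d p ≠ 0) (hιp : iota g d p ∈ V) (c : Fin N) :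
    pd c (dualInversion g d F) p = t1q g d p * pd c F (iota g d p) - 2 / (1 - d) * (g *ᵥ p) c := by
  obtain ⟨hk, hs⟩ := t1q_ne_zero_iff.1 hτ
  have hE : euler F (iota g d p) = ((2 : ℕ) : ℝ) * F (iota g d p)
      + 1 / (1 - d) * (iota g d p ⬝ᵥ g *ᵥ iota g d p) := by
    rw [hF.euler_eq _ hιp]; norm_num
  unfold dualInversion
  rw [pd_pow_mul_comp_iota hg hτ ((hF.contDiffAt _ hιp).differentiableAt (by simp))
    hE c, dotProduct_mulVec_iota, t1q_eq]
  field_simp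

lemma pd_pd_dualInversion (hF : IsDualQuasiHomogeneousOn g d V F) (hg : g.IsSymm)
    (hτ : t1q g d p ≠ 0) (hιp : iota g d p ∈ V) (b c : Fin N) :
    pd b (pd c (dualInversion g d F)) p
      = pd b (pd c F) (iota g d p) - 2 * (g *ᵥ p) b * (g *ᵥ p) c / t1q g d p
        - 2 / (1 - d) * g c b := by
  obtain ⟨hk, hs⟩ := t1q_ne_zero_iff.1 hτ
  have hcongr : pd c (dualInversion g d F) =ᶠ[𝓝 p]
      fun x => t1q g d x ^ 1 * pd c F (iota g d x) - 2 / (1 - d) * (g *ᵥ x) c := by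
    filter_upwards [(isOpen_setOf_t1q_ne_zero_and_iota_mem hF.isOpen).mem_nhds ⟨hτ, hιp⟩]
      with x hx
    rw [pow_one, hF.pd_dualInversion hg hx.1 hx.2]
  have hE : euler (pd c F) (iota g d p) = ((1 : ℕ) : ℝ) * pd c F (iota g d p)
      + 2 / (1 - d) * (g *ᵥ iota g d p) c := by
    rw [hF.euler_pd hg hιp]; norm_num
  have hdF := (hF.contDiffAt_pd hιp c).differentiableAt (by simp)
  have hdι := differentiableAt_iota hτ
  rw [pd_congr_of_eventuallyEq hcongr, pd_sub (by fun_prop) (by fun_prop),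
    pd_pow_mul_comp_iota hg hτ hdF hE b, pd_const_mul (by fun_prop), pd_mulVec_apply,
    mulVec_iota_apply]
  field_simp

lemma c3_dualInversion (hF : IsDualQuasiHomogeneousOn g d V F) (hg : g.IsSymm)
    (hτ : t1q g d p ≠ 0) (hιp : iota g d p ∈ V) (a b c : Fin N) :
    c3 (dualInversion g d F) a b c p = (t1q g d p)⁻¹
      * inversionTensor g (fun a b c => c3 F a b c (iota g d p)) p (p ⬝ᵥ g *ᵥ p) a b c := by
  obtain ⟨hk, hs⟩ := t1q_ne_zero_iff.1 hτ
  have hcongr : pd b (pd c (dualInversion g d F)) =ᶠ[𝓝 p]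
      fun x => t1q g d x ^ 0 * pd b (pd c F) (iota g d x)
        - 2 * (g *ᵥ x) b * (g *ᵥ x) c * (t1q g d x)⁻¹ - 2 / (1 - d) * g c b := by
    filter_upwards [(isOpen_setOf_t1q_ne_zero_and_iota_mem hF.isOpen).mem_nhds ⟨hτ, hιp⟩]
      with x hx
    rw [pow_zero, one_mul, hF.pd_pd_dualInversion hg hx.1 hx.2, div_eq_mul_inv]
  have hE : euler (pd b (pd c F)) (iota g d p) = ((0 : ℕ) : ℝ) * pd b (pd c F) (iota g d p)
      + 2 / (1 - d) * g c b := by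
    rw [hF.euler_pd_pd hg hιp]; norm_num
  have hdF := (hF.contDiffAt_pd_pd hιp b c).differentiableAt (by simp)
  have hdι := differentiableAt_iota hτ
  rw [c3, pd_congr_of_eventuallyEq hcongr, pd_sub (by fun_prop (disch := exact hτ)) (by fun_prop),
    pd_sub (by fun_prop) (by fun_prop (disch := exact hτ)), pd_const,
    pd_pow_mul_comp_iota hg hτ hdF hE a,
    pd_mul (by fun_prop) (by fun_prop (disch := exact hτ)), pd_mul (by fun_prop) (by fun_prop),
    pd_const_mul (by fun_prop), pd_mulVec_apply, pd_mulVec_apply, pd_inv (by fun_prop) hτ,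
    pd_t1q hg, inversionTensor]
  simp only [c3, hg.apply]
  rw [t1q_eq]
  field_simp
  ring

end IsDualQuasiHomogeneousOn

end Prepotential

theorem statement11_general {N : ℕ}
    (g : Matrix (Fin N) (Fin N) ℝ) (hgsymm : g.IsSymm) (hgdet : IsUnit g.det)
    (d : ℝ)
    (V : Set (Fin N → ℝ)) (hV : IsOpen V)
    (Fs : (Fin N → ℝ) → ℝ)
    (hFs : ∀ p ∈ V, ContDiffAt ℝ (⊤ : ℕ∞) Fs p)
    (hassoc : IsAssocG Fs g V)
    (hQH : ∀ p ∈ V, (∑ σ, p σ * pd σ Fs p) =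
      2 * Fs p + (1 / (1 - d)) * ∑ a, ∑ b, g a b * p a * p b) :
    IsAssocG (fun p => (t1q g d p) ^ 2 * Fs (iota g d p)) g
      {p | t1q g d p ≠ 0 ∧ iota g d p ∈ V} := by
  have hF : IsDualQuasiHomogeneousOn g d V Fs := ⟨hV, hFs, fun q hq => by
    rw [euler, hQH q hq, sum_sum_apply_mul_mul_eq_dotProduct_mulVec]⟩
  rintro p ⟨hτ, hιp⟩
  have hT : IsAssocTensor g⁻¹ (fun a b c => c3 Fs a b c (iota g d p)) := hassoc _ hιp
  have hc3 : (fun a b c => c3 (dualInversion g d Fs) a b c p) = fun a b c => (t1q g d p)⁻¹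
      * inversionTensor g (fun a b c => c3 Fs a b c (iota g d p)) p (p ⬝ᵥ g *ᵥ p) a b c := by
    funext a b c
    exact hF.c3_dualInversion hgsymm hτ hιp a b c
  show IsAssocTensor g⁻¹ fun a b c => c3 (dualInversion g d Fs) a b c p
  rw [hc3]
  exact (hT.inversion hgsymm hgdet (hF.isSymmTensor_c3 hιp) (t1q_ne_zero_iff.1 hτ).2 rfl
    (hF.c3_iota_dotProduct hgsymm hτ hιp)).const_mul _

/-- inversion symmetry of almost dual prepotentials, case `d ≠ 1`:
if `F*` satisfies the associativity equations w.r.t. `g` together with the dual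
quasihomogeneity condition, then `F̂*(p) = t₁(p)² F*(ι(p))` satisfies the associativity
equations w.r.t. `g` on `V' = {p : t₁(p) ≠ 0, ι(p) ∈ V}`. -/
theorem statement11 {N : ℕ}
    (g : Matrix (Fin N) (Fin N) ℝ) (hgsymm : g.IsSymm) (hgdet : IsUnit g.det)
    (d : ℝ) (hd : d ≠ 1)
    (V : Set (Fin N → ℝ)) (hV : IsOpen V)
    (Fs : (Fin N → ℝ) → ℝ)
    (hFs : ∀ p ∈ V, ContDiffAt ℝ (⊤ : ℕ∞) Fs p)
    (hassoc : IsAssocG Fs g V)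
    (hQH : ∀ p ∈ V, (∑ σ, p σ * pd σ Fs p) =
      2 * Fs p + (1 / (1 - d)) * ∑ a, ∑ b, g a b * p a * p b) :
    IsAssocG (fun p => (t1q g d p) ^ 2 * Fs (iota g d p)) g
      {p | t1q g d p ≠ 0 ∧ iota g d p ∈ V} :=
  statement11_general g hgsymm hgdet d V hV Fs hFs hassoc hQH
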